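/- Let ε^{(1)},...,ε^{(K)} be i.i.d. standard Gaussians, δ ∈ ℝ, and let ε₀ = ε^{(m)} where m = argmin_i |δ + ε^{(i)}|. Then ε₀ has density p(u) = K·φ(u)·(1 - F(|δ + u|))^{K-1}, where F is the CDF of |δ + Z| for Z ~ N(0,1), i.e., F(v) = Φ(v - δ) - Φ(-v - δ) for v ≥ 0 and F(v)=0 for v < 0. -/

import Mathlib

open MeasureTheory ProbabilityTheory Real

noncomputable def stdPhi (z : ℝ) : ℝ := (Real.sqrt (2 * Real.pi))⁻¹ * Real.exp (-z ^ 2 / 2)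

noncomputable def stdCDF (z : ℝ) : ℝ := ∫ u in Set.Iic z, stdPhi u

/-- CDF of `|δ + Z|` for `Z ~ N(0,1)`. -/
noncomputable def absShiftCDF (δ v : ℝ) : ℝ :=
  if 0 ≤ v then stdCDF (v - δ) - stdCDF (-v - δ) else 0

/-!
Almost surely the scores `|δ + ε i|` are pairwise distinct, since each level set of the score
is a two-point set and hence Gaussian-null. So, up to a null set, the selected noise lies in `A`
exactly when some coordinate `ε i` lies in `A` and strictly beats all others. These `K` events are
disjoint, and integrating out `ε i` (Fubini) gives each of them probability
`∫_A φ(u) P(|δ + Z| > |δ + u|)^(K-1) du = ∫_A φ(u) (1 - F(|δ + u|))^(K-1) du`.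
-/

open Set

def IsStrictMinAt {α ι : Type*} (s : α → ℝ) (ε : ι → α) (i : ι) : Prop :=
  ∀ j, j ≠ i → s (ε i) < s (ε j)

lemma isStrictMinAt_iff_eq {α ι : Type*} {s : α → ℝ} {ε : ι → α} (hinj : (s ∘ ε).Injective)
    {i : ι} (hmin : ∀ j, s (ε i) ≤ s (ε j)) {j : ι} : IsStrictMinAt s ε j ↔ j = i := by
  constructor
  · intro hj
    by_contra hji
    exact (hj i (Ne.symm hji)).not_ge (hmin j)
  · rintro rfl k hk
    exact (hmin k).lt_of_ne fun h => hk (hinj h).symm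

section BestOfK

variable {α : Type*} [MeasurableSpace α] (ν : Measure α) [SigmaFinite ν] {n : ℕ}

lemma pi_apply_eq_lintegral_insertNth (i : Fin (n + 1)) {S : Set (Fin (n + 1) → α)}
    (hS : MeasurableSet S) :
    Measure.pi (fun _ => ν) S
      = ∫⁻ y, Measure.pi (fun _ : Fin n => ν) {r | i.insertNth y r ∈ S} ∂ν := by
  have hmp := (measurePreserving_piFinSuccAbove (fun _ : Fin (n + 1) => ν) i).symm
  rw [← hmp.measure_preimage_equiv, Measure.prod_apply (hmp.measurable hS)]
  rfl

variable {s : α → ℝ}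

lemma measurableSet_isStrictMinAt (hs : Measurable s) {ι : Type*} [Countable ι] (i : ι) :
    MeasurableSet {ε : ι → α | IsStrictMinAt s ε i} := by
  simp only [IsStrictMinAt, ofPred_forall]
  exact .iInter fun j => .iInter fun _ =>
    measurableSet_lt (hs.comp (measurable_pi_apply i)) (hs.comp (measurable_pi_apply j))

lemma pi_eval_mem_isStrictMinAt (hs : Measurable s) {A : Set α} (hA : MeasurableSet A)
    (i : Fin (n + 1)) :
    Measure.pi (fun _ => ν) {ε | ε i ∈ A ∧ IsStrictMinAt s ε i}
      = ∫⁻ y in A, ν {x | s y < s x} ^ n ∂ν := by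
  have hS : MeasurableSet {ε : Fin (n + 1) → α | ε i ∈ A ∧ IsStrictMinAt s ε i} :=
    (measurable_pi_apply i hA).inter (measurableSet_isStrictMinAt hs i)
  rw [pi_apply_eq_lintegral_insertNth ν i hS, ← lintegral_indicator hA]
  congr 1 with y
  have hslice : {r : Fin n → α | i.insertNth y r ∈ {ε | ε i ∈ A ∧ IsStrictMinAt s ε i}}
      = {_r | y ∈ A} ∩ univ.pi fun _ => {x | s y < s x} := by
    ext r
    simp [IsStrictMinAt, i.forall_iff_succAbove]
  rw [hslice]
  by_cases hy : y ∈ A <;> simp [hy, Measure.pi_pi]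

lemma pi_tie_null (hs : Measurable s) (hties : ∀ c, ν (s ⁻¹' {c}) = 0)
    {i j : Fin (n + 1)} (hij : i ≠ j) :
    Measure.pi (fun _ => ν) {ε | s (ε i) = s (ε j)} = 0 := by
  obtain ⟨j', rfl⟩ := Fin.exists_succAbove_eq hij.symm
  have hS : MeasurableSet {ε : Fin (n + 1) → α | s (ε i) = s (ε (i.succAbove j'))} :=
    measurableSet_eq_fun (hs.comp (measurable_pi_apply _)) (hs.comp (measurable_pi_apply _))
  rw [pi_apply_eq_lintegral_insertNth ν i hS]
  have hslice (y : α) :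
      {r : Fin n → α | i.insertNth y r ∈ {ε : Fin (n + 1) → α | s (ε i) = s (ε (i.succAbove j'))}}
        = Function.eval j' ⁻¹' (s ⁻¹' {s y}) := by
    ext r
    simp [eq_comm]
  simp only [hslice, Measure.pi_eval_preimage_null (fun _ : Fin n => ν) (hties _), lintegral_zero]

lemma ae_injective_comp (hs : Measurable s) (hties : ∀ c, ν (s ⁻¹' {c}) = 0) :
    ∀ᵐ ε ∂Measure.pi (fun _ : Fin (n + 1) => ν), (s ∘ ε).Injective := by
  have : ∀ i j : Fin (n + 1), ∀ᵐ ε ∂Measure.pi (fun _ => ν), s (ε i) = s (ε j) → i = j := by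
    intro i j
    by_cases hij : i = j
    · exact .of_forall fun _ _ => hij
    · exact measure_mono_null (fun ε h => (Classical.not_imp.mp h).1)
        (pi_tie_null ν hs hties hij)
  filter_upwards [ae_all_iff.mpr fun i => ae_all_iff.mpr (this i)] with ε hε i j
  exact hε i j

lemma map_apply_of_isMinSelection (hs : Measurable s) (hties : ∀ c, ν (s ⁻¹' {c}) = 0)
    {f : (Fin (n + 1) → α) → α} (hf : Measurable f)
    (hsel : ∀ ε, (∃ i, f ε = ε i) ∧ ∀ i, s (f ε) ≤ s (ε i)) {A : Set α} (hA : MeasurableSet A) :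
    Measure.map f (Measure.pi fun _ => ν) A = (n + 1) * ∫⁻ y in A, ν {x | s y < s x} ^ n ∂ν := by
  set S : Fin (n + 1) → Set (Fin (n + 1) → α) := fun i => {ε | ε i ∈ A ∧ IsStrictMinAt s ε i}
  have hpreimage : f ⁻¹' A =ᵐ[Measure.pi fun _ => ν] ⋃ i, S i := by
    refine Filter.eventuallyEq_set.mpr ?_
    filter_upwards [ae_injective_comp ν hs hties] with ε hinj
    obtain ⟨⟨i, hi⟩, hmin⟩ := hsel ε
    rw [hi] at hmin
    simp [S, hi, isStrictMinAt_iff_eq hinj hmin]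
  have hdisj : Pairwise (Function.onFun Disjoint S) := fun i j hij =>
    disjoint_left.mpr fun ε hi hj => (hi.2 j hij.symm).asymm (hj.2 i hij)
  have hS (i : Fin (n + 1)) : MeasurableSet (S i) :=
    (measurable_pi_apply i hA).inter (measurableSet_isStrictMinAt hs i)
  rw [Measure.map_apply hf hA, measure_congr hpreimage, measure_iUnion hdisj hS]
  simp [S, pi_eval_mem_isStrictMinAt ν hs hA]

end BestOfK

section StandardGaussian

lemma stdPhi_eq_gaussianPDFReal : stdPhi = gaussianPDFReal 0 1 := by
  funext x
  simp [stdPhi, gaussianPDFReal]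

lemma stdCDF_eq_cdf : stdCDF = cdf (gaussianReal 0 1) := by
  funext z
  rw [cdf_eq_real, measureReal_def, gaussianReal_apply_eq_integral 0 one_ne_zero,
    ENNReal.toReal_ofReal
      (setIntegral_nonneg measurableSet_Iic fun x _ => gaussianPDFReal_nonneg 0 1 x),
    stdCDF, stdPhi_eq_gaussianPDFReal]

@[fun_prop]
lemma measurable_absShiftCDF (δ : ℝ) : Measurable (absShiftCDF δ) := by
  have hcdf : Measurable stdCDF := stdCDF_eq_cdf ▸ (monotone_cdf _).measurable
  exact Measurable.ite measurableSet_Ici (by fun_prop) measurable_const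

lemma gaussianReal_abs_add_le (δ : ℝ) {v : ℝ} (hv : 0 ≤ v) :
    (gaussianReal 0 1).real {x | |δ + x| ≤ v} = absShiftCDF δ v := by
  have := nullSingletonClass_gaussianReal (μ := 0) one_ne_zero
  have hIcc : {x | |δ + x| ≤ v} = Icc (-v - δ) (v - δ) := by
    ext x
    simp only [mem_ofPred_eq, mem_Icc, abs_le]
    constructor <;> rintro ⟨h₁, h₂⟩ <;> constructor <;> linarith
  have hle : stdCDF (-v - δ) ≤ stdCDF (v - δ) := stdCDF_eq_cdf ▸ monotone_cdf _ (by linarith)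
  rw [hIcc, ← measureReal_congr Ioc_ae_eq_Icc, measureReal_def, ← measure_cdf (gaussianReal 0 1),
    StieltjesFunction.measure_Ioc, ← stdCDF_eq_cdf, ENNReal.toReal_ofReal (sub_nonneg.mpr hle),
    absShiftCDF, if_pos hv]

lemma absShiftCDF_nonneg (δ v : ℝ) : 0 ≤ absShiftCDF δ v := by
  by_cases hv : 0 ≤ v
  · exact gaussianReal_abs_add_le δ hv ▸ measureReal_nonneg
  · simp [absShiftCDF, hv]

lemma absShiftCDF_le_one (δ v : ℝ) : absShiftCDF δ v ≤ 1 := by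
  by_cases hv : 0 ≤ v
  · exact gaussianReal_abs_add_le δ hv ▸ measureReal_le_one
  · simp [absShiftCDF, hv]

lemma gaussianReal_abs_add_lt (δ y : ℝ) :
    gaussianReal 0 1 {x | |δ + y| < |δ + x|} = ENNReal.ofReal (1 - absShiftCDF δ |δ + y|) := by
  have hcompl : {x | |δ + y| < |δ + x|} = {x | |δ + x| ≤ |δ + y|}ᶜ := by
    ext x
    simp
  have hmeas : MeasurableSet {x | |δ + x| ≤ |δ + y|} :=
    measurableSet_le (by fun_prop) (by fun_prop)
  rw [← ofReal_measureReal, hcompl, measureReal_compl hmeas, probReal_univ,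
    gaussianReal_abs_add_le δ (abs_nonneg _)]

lemma gaussianReal_abs_add_preimage_singleton (δ c : ℝ) :
    gaussianReal 0 1 ((fun x => |δ + x|) ⁻¹' {c}) = 0 := by
  have := nullSingletonClass_gaussianReal (μ := 0) one_ne_zero
  refine measure_mono_null (fun x hx => ?_) ((toFinite {c - δ, -c - δ}).measure_zero _)
  have hx : |δ + x| = c := hx
  rcases (abs_eq (hx ▸ abs_nonneg _)).mp hx with h | h
  · exact .inl (by linarith)
  · exact .inr (by simp only [mem_singleton_iff]; linarith)

lemma setLIntegral_gaussianReal_ofReal {g : ℝ → ℝ} (hg : Measurable g) (hg0 : ∀ x, 0 ≤ g x)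
    (hg1 : ∀ x, g x ≤ 1) {A : Set ℝ} (hA : MeasurableSet A) :
    ∫⁻ y in A, ENNReal.ofReal (g y) ∂gaussianReal 0 1
      = ENNReal.ofReal (∫ y in A, stdPhi y * g y) := by
  rw [stdPhi_eq_gaussianPDFReal]
  have hint : IntegrableOn (fun y => gaussianPDFReal 0 1 y * g y) A := by
    refine (integrable_gaussianPDFReal 0 1).integrableOn.mono' (by fun_prop)
      (.of_forall fun y => ?_)
    rw [norm_mul, Real.norm_of_nonneg (gaussianPDFReal_nonneg 0 1 y), Real.norm_of_nonneg (hg0 y)]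
    exact mul_le_of_le_one_right (gaussianPDFReal_nonneg 0 1 y) (hg1 y)
  rw [ofReal_integral_eq_lintegral_ofReal hint
      (.of_forall fun y => mul_nonneg (gaussianPDFReal_nonneg 0 1 y) (hg0 y)),
    gaussianReal_of_var_ne_zero 0 one_ne_zero, restrict_withDensity hA,
    lintegral_withDensity_eq_lintegral_mul _ (measurable_gaussianPDF 0 1) hg.ennreal_ofReal]
  congr 1 with y
  rw [Pi.mul_apply, gaussianPDF, ENNReal.ofReal_mul (gaussianPDFReal_nonneg 0 1 y)]

end StandardGaussian

theorem stmt_9_general (K : ℕ) (δ : ℝ) (f : (Fin K → ℝ) → ℝ)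
    (hfm : Measurable f)
    (hsel : ∀ ε : Fin K → ℝ, (∃ i, f ε = ε i) ∧ ∀ i, |δ + f ε| ≤ |δ + ε i|) :
    ∀ A : Set ℝ, MeasurableSet A →
      (Measure.map f (Measure.pi fun _ : Fin K => gaussianReal 0 1)) A
        = ENNReal.ofReal
            (∫ u in A, (K : ℝ) * stdPhi u * (1 - absShiftCDF δ (|δ + u|)) ^ (K - 1)) := by
  intro A hA
  obtain ⟨n, rfl⟩ : ∃ n, K = n + 1 := Nat.exists_eq_add_one.mpr (hsel 0).1.choose.pos
  have hg0 (u : ℝ) : 0 ≤ 1 - absShiftCDF δ |δ + u| := sub_nonneg.mpr (absShiftCDF_le_one δ _)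
  have hg1 (u : ℝ) : 1 - absShiftCDF δ |δ + u| ≤ 1 := sub_le_self _ (absShiftCDF_nonneg δ _)
  rw [map_apply_of_isMinSelection (gaussianReal 0 1) (by fun_prop)
    (gaussianReal_abs_add_preimage_singleton δ) hfm hsel hA]
  simp_rw [gaussianReal_abs_add_lt, ← ENNReal.ofReal_pow (hg0 _)]
  rw [setLIntegral_gaussianReal_ofReal (by fun_prop) (fun u => pow_nonneg (hg0 u) n)
      (fun u => pow_le_one₀ (hg0 u) (hg1 u)) hA,
    Nat.add_sub_cancel, ← Nat.cast_add_one, ← ENNReal.ofReal_natCast,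
    ← ENNReal.ofReal_mul (by positivity), ← integral_const_mul]
  simp only [Nat.cast_add_one, mul_assoc]

/-- The best-of-`K` selected noise (the coordinate minimizing `|δ + ε i|`) has density
`u ↦ K φ(u) (1 - F(|δ+u|))^{K-1}`. -/
theorem stmt_9 (K : ℕ) (hK : 1 ≤ K) (δ : ℝ) (f : (Fin K → ℝ) → ℝ)
    (hfm : Measurable f)
    (hsel : ∀ ε : Fin K → ℝ, (∃ i, f ε = ε i) ∧ ∀ i, |δ + f ε| ≤ |δ + ε i|) :
    ∀ A : Set ℝ, MeasurableSet A →
      (Measure.map f (Measure.pi fun _ : Fin K => gaussianReal 0 1)) A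
        = ENNReal.ofReal
            (∫ u in A, (K : ℝ) * stdPhi u * (1 - absShiftCDF δ (|δ + u|)) ^ (K - 1)) :=
  stmt_9_general K δ f hfm hsel
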